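/- Let q > 1 be real and t = q^{-s} a complex variable with 0 < |t| < q^{-1/2} (i.e., Re(s) > 1/2). For ε, δ ∈ {±1}, define Γ(t) = ε·(q-1)·( ε·q^{1/2}t²/(1-q t²) + δ·q^{-1/2}t/(1-q^{-1}) )·q^{-3/2}t^{-2}(1-qt²)/(1-q^{-2}t^{-2}) (the unramified-twist gamma factor of Corollary 3.7 with the Tate factor for the trivial character). Then Γ extends to a rational function of t that is holomorphic and nonzero at t = q^{-1} if and only if δ = -ε. -/

import Mathlib

/-!
Write `a = q⁻¹` and `η = εδ`. Since `ε² = δ² = 1` and `(q - 1)/(1 - q⁻¹) = q`, the gamma factor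
collapses to `t (1 - η t) / (t - η a)`. For `η = -1` this is `t (1 + t) / (t + a)`, holomorphic and
nonzero at `a`; for `η = 1` it has a simple pole at `a`, because the numerator `a (1 - a)` does not
vanish there.
-/

open Filter Topology

/-- `s` stands for `q^{1/2}`. -/
def unramifiedGammaFactor {K : Type*} [Field K] (s q ε δ t : K) : K :=
  ε * (q - 1) * (ε * s * t ^ 2 / (1 - q * t ^ 2) + δ * s⁻¹ * t / (1 - q⁻¹)) *
    ((s * q)⁻¹ * t⁻¹ ^ 2 * (1 - q * t ^ 2) / (1 - q⁻¹ ^ 2 * t⁻¹ ^ 2))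

theorem unramifiedGammaFactor_eq {K : Type*} [Field K] {s q ε δ t : K} (hsq : s ^ 2 = q)
    (hq : q ≠ 0) (hε : ε ^ 2 = 1) (hδ : δ ^ 2 = 1) (ht : t ≠ 0) (hqt : 1 - q * t ^ 2 ≠ 0)
    (hq1 : 1 - q⁻¹ ≠ 0) (hm : t - q⁻¹ ≠ 0) (hp : t + q⁻¹ ≠ 0) :
    unramifiedGammaFactor s q ε δ t = t * (1 - ε * δ * t) / (t - ε * δ * q⁻¹) := by
  have hs : s ≠ 0 := by rintro rfl; simp_all
  have hη : t - ε * δ * q⁻¹ ≠ 0 := by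
    intro h
    apply mul_ne_zero hm hp
    linear_combination (t + ε * δ * q⁻¹) * h + q⁻¹ ^ 2 * δ ^ 2 * hε + q⁻¹ ^ 2 * hδ
  have hq1' : q - 1 ≠ 0 := by
    contrapose! hq1
    rw [sub_eq_zero.mp hq1, inv_one, sub_self]
  have hmp : q ^ 2 * t ^ 2 - 1 ≠ 0 := by
    have : q ^ 2 * t ^ 2 - 1 = q ^ 2 * ((t - q⁻¹) * (t + q⁻¹)) := by field_simp; ring
    rw [this]
    exact mul_ne_zero (pow_ne_zero 2 hq) (mul_ne_zero hm hp)
  rw [unramifiedGammaFactor, eq_div_iff hη]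
  field_simp
  rw [← hsq]
  linear_combination ((s ^ 2 - 1) * (s ^ 2) ^ 2 * t ^ 2 - ε * δ * (s ^ 2 - 1) * s ^ 2 * t
    - δ ^ 2 * s ^ 2 * (1 - s ^ 2 * t ^ 2)) * hε - s ^ 2 * (1 - s ^ 2 * t ^ 2) * hδ

theorem unramifiedGammaFactor_eventuallyEq {s q ε δ : ℂ} (hsq : s ^ 2 = q) (hq : q ≠ 0)
    (hq1 : q ≠ 1) (hε : ε ^ 2 = 1) (hδ : δ ^ 2 = 1) :
    unramifiedGammaFactor s q ε δ =ᶠ[𝓝[≠] q⁻¹] fun t => t * (1 - ε * δ * t) / (t - ε * δ * q⁻¹) := by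
  have hq1' : 1 - q⁻¹ ≠ 0 := by
    rwa [sub_ne_zero, ne_comm, inv_ne_one]
  have ht : ∀ᶠ t in 𝓝 q⁻¹, t ≠ 0 := eventually_ne_nhds (inv_ne_zero hq)
  have hqt : ∀ᶠ t in 𝓝 q⁻¹, 1 - q * t ^ 2 ≠ 0 := by
    refine ContinuousAt.eventually_ne (by fun_prop) ?_
    rwa [sq, ← mul_assoc, mul_inv_cancel₀ hq, one_mul]
  have hp : ∀ᶠ t in 𝓝 q⁻¹, t + q⁻¹ ≠ 0 := by
    refine ContinuousAt.eventually_ne (by fun_prop) ?_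
    simpa [← two_mul] using hq
  filter_upwards [nhdsWithin_le_nhds (ht.and (hqt.and hp)), self_mem_nhdsWithin]
    with t ⟨ht, hqt, hp⟩ hm
  exact unramifiedGammaFactor_eq hsq hq hε hδ ht hqt hq1' (sub_ne_zero.mpr hm) hp

theorem not_continuousAt_of_eventuallyEq_div_sub {𝕜 : Type*} [NontriviallyNormedField 𝕜]
    {f g : 𝕜 → 𝕜} {b : 𝕜} (hg : ContinuousAt g b) (hgb : g b ≠ 0)
    (hfg : f =ᶠ[𝓝[≠] b] fun t => g t / (t - b)) : ¬ ContinuousAt f b := by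
  intro hf
  have hlim : Tendsto (fun t => f t * (t - b)) (𝓝[≠] b) (𝓝 (f b * (b - b))) :=
    (hf.tendsto.mul (tendsto_id.sub tendsto_const_nhds)).mono_left nhdsWithin_le_nhds
  have hfg' : (fun t => f t * (t - b)) =ᶠ[𝓝[≠] b] g := by
    filter_upwards [hfg, self_mem_nhdsWithin] with t ht htb
    rw [ht, div_mul_cancel₀ _ (sub_ne_zero.mpr htb)]
  rw [sub_self, mul_zero] at hlim
  exact hgb (tendsto_nhds_unique (hg.tendsto.mono_left nhdsWithin_le_nhds) (hlim.congr' hfg'))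

theorem exists_analyticAt_ne_zero_eventuallyEq_iff {a η : ℂ} (ha : a ≠ 0) (ha_one : a ≠ 1)
    (ha_neg_one : a ≠ -1) (hη : η = 1 ∨ η = -1) :
    (∃ f : ℂ → ℂ, AnalyticAt ℂ f a ∧ f a ≠ 0 ∧
      f =ᶠ[𝓝[≠] a] fun t => t * (1 - η * t) / (t - η * a)) ↔ η = -1 := by
  rcases hη with rfl | rfl
  · refine iff_of_false ?_ (by norm_num)
    rintro ⟨f, hf, -, hfg⟩
    refine not_continuousAt_of_eventuallyEq_div_sub (g := fun t => t * (1 - 1 * t)) (by fun_prop)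
      ?_ (by simpa only [one_mul] using hfg) hf.continuousAt
    simpa [sub_eq_zero] using ⟨ha, ha_one.symm⟩
  · refine iff_of_true ⟨_, ?_, ?_, EventuallyEq.rfl⟩ rfl
    · have : a - -1 * a ≠ 0 := by simpa [← two_mul] using ha
      fun_prop (disch := exact this)
    · have : 1 + a ≠ 0 := by rwa [add_comm, Ne, add_eq_zero_iff_eq_neg]
      simp [ha, this, ← two_mul]

/-- `Γ` (the unramified-twist gamma factor of Corollary 3.7, with `t = q^{-s}`,
`ε = τ(γ)`, `δ = χ(g_χ)τ(ϖ)`) extends to a function holomorphic and nonzero at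
`t = q⁻¹` if and only if `δ = -ε`. -/
theorem stmt19 (q : ℝ) (hq : 1 < q) (ε δ : ℂ)
    (hε : ε = 1 ∨ ε = -1) (hδ : δ = 1 ∨ δ = -1)
    (Γ : ℂ → ℂ)
    (hΓ : ∀ t : ℂ, Γ t =
      ε * ((q : ℂ) - 1) *
        (ε * (Real.sqrt q : ℂ) * t^2 / (1 - (q : ℂ) * t^2) +
          δ * ((Real.sqrt q : ℂ))⁻¹ * t / (1 - (q : ℂ)⁻¹)) *
        (((Real.sqrt q : ℂ) * (q : ℂ))⁻¹ * t⁻¹^2 * (1 - (q : ℂ) * t^2) /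
          (1 - (q : ℂ)⁻¹^2 * t⁻¹^2))) :
    (∃ f : ℂ → ℂ, AnalyticAt ℂ f ((q : ℂ)⁻¹) ∧ f ((q : ℂ)⁻¹) ≠ 0 ∧
      ∀ᶠ t in nhdsWithin ((q : ℂ)⁻¹) {((q : ℂ)⁻¹)}ᶜ, f t = Γ t) ↔ δ = -ε := by
  have hq0 : (q : ℂ) ≠ 0 := by exact_mod_cast (zero_lt_one.trans hq).ne'
  have hq1 : (q : ℂ) ≠ 1 := by exact_mod_cast hq.ne'
  have hqi : (q : ℂ)⁻¹ ≠ -1 := by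
    have : 0 < q⁻¹ := by positivity
    exact_mod_cast (by linarith : q⁻¹ ≠ -1)
  have hsq : ((Real.sqrt q : ℝ) : ℂ) ^ 2 = q := by
    exact_mod_cast Real.sq_sqrt (zero_lt_one.trans hq).le
  have hε2 : ε ^ 2 = 1 := by rcases hε with rfl | rfl <;> norm_num
  have hδ2 : δ ^ 2 = 1 := by rcases hδ with rfl | rfl <;> norm_num
  have hεδ : ε * δ = 1 ∨ ε * δ = -1 := by
    rcases hε with rfl | rfl <;> rcases hδ with rfl | rfl <;> norm_num
  have hδε : δ = -ε ↔ ε * δ = -1 := by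
    rcases hε with rfl | rfl <;> simp [neg_eq_iff_eq_neg]
  obtain rfl : Γ = unramifiedGammaFactor _ _ ε δ := funext hΓ
  have hΓ := unramifiedGammaFactor_eventuallyEq hsq hq0 hq1 hε2 hδ2
  rw [hδε, ← exists_analyticAt_ne_zero_eventuallyEq_iff (inv_ne_zero hq0) (inv_ne_one.mpr hq1)
    hqi hεδ]
  exact exists_congr fun f => and_congr_right' <| and_congr_right'
    ⟨fun h => EventuallyEq.trans h hΓ, fun h => h.trans hΓ.symm⟩
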